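/- arXiv:2006.12757 — 5 statements merged into one kernel-verified Lean document; each statement's English description precedes it below -/
import Mathlib

section
/- Let T, S : H₁ → H₂ be bounded linear operators between Hilbert spaces and α > 0. Then the following operator identity holds: (S*S + αI)⁻¹S*T − (T*T + αI)⁻¹T*T = (S*S + αI)⁻¹S*(T − S) T*T (T*T + αI)⁻¹ + α (S*S + αI)⁻¹ (S* − T*) (TT* + αI)⁻¹ T. -/
open ContinuousLinearMap

/-- For bounded operators `T, S : H₁ → H₂` between Hilbert spaces and `α > 0`,
with `RS = (S*S + αI)⁻¹`, `RT = (T*T + αI)⁻¹`, `RU = (TT* + αI)⁻¹`, the identity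
`(S*S+αI)⁻¹S*T − (T*T+αI)⁻¹T*T
  = (S*S+αI)⁻¹S*(T−S) T*T (T*T+αI)⁻¹ + α (S*S+αI)⁻¹(S*−T*)(TT*+αI)⁻¹T` holds. -/
theorem stmt10 {H₁ H₂ : Type*}
    [NormedAddCommGroup H₁] [InnerProductSpace ℝ H₁] [CompleteSpace H₁]
    [NormedAddCommGroup H₂] [InnerProductSpace ℝ H₂] [CompleteSpace H₂]
    (T S : H₁ →L[ℝ] H₂) (α : ℝ) (hα : 0 < α)
    (RS RT : H₁ →L[ℝ] H₁) (RU : H₂ →L[ℝ] H₂)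
    (hRS₁ : RS ∘L (adjoint S ∘L S + α • ContinuousLinearMap.id ℝ H₁) =
      ContinuousLinearMap.id ℝ H₁)
    (hRS₂ : (adjoint S ∘L S + α • ContinuousLinearMap.id ℝ H₁) ∘L RS =
      ContinuousLinearMap.id ℝ H₁)
    (hRT₁ : RT ∘L (adjoint T ∘L T + α • ContinuousLinearMap.id ℝ H₁) =
      ContinuousLinearMap.id ℝ H₁)
    (hRT₂ : (adjoint T ∘L T + α • ContinuousLinearMap.id ℝ H₁) ∘L RT =
      ContinuousLinearMap.id ℝ H₁)
    (hRU₁ : RU ∘L (T ∘L adjoint T + α • ContinuousLinearMap.id ℝ H₂) =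
      ContinuousLinearMap.id ℝ H₂)
    (hRU₂ : (T ∘L adjoint T + α • ContinuousLinearMap.id ℝ H₂) ∘L RU =
      ContinuousLinearMap.id ℝ H₂) :
    RS ∘L adjoint S ∘L T - RT ∘L adjoint T ∘L T =
      RS ∘L adjoint S ∘L (T - S) ∘L adjoint T ∘L T ∘L RT +
        α • (RS ∘L (adjoint S - adjoint T) ∘L RU ∘L T) := by
  have hS : ∀ y : H₁, RS (adjoint S (S y)) = y - α • RS y := fun y => by
    have := congrFun (congrArg DFunLike.coe hRS₁) y
    simp only [coe_comp', Function.comp_apply, add_apply, coe_smul', Pi.smul_apply,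
      coe_id', id_eq, map_add, map_smul] at this
    linear_combination (norm := module) this
  have hT1 : ∀ y : H₁, RT (adjoint T (T y)) = y - α • RT y := fun y => by
    have := congrFun (congrArg DFunLike.coe hRT₁) y
    simp only [coe_comp', Function.comp_apply, add_apply, coe_smul', Pi.smul_apply,
      coe_id', id_eq, map_add, map_smul] at this
    linear_combination (norm := module) this
  have hT2 : ∀ y : H₁, adjoint T (T (RT y)) = y - α • RT y := fun y => by
    have := congrFun (congrArg DFunLike.coe hRT₂) y
    simp only [coe_comp', Function.comp_apply, add_apply, coe_smul', Pi.smul_apply,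
      coe_id', id_eq] at this
    linear_combination (norm := module) this
  have hU : ∀ z : H₂, RU (T (adjoint T z)) = z - α • RU z := fun z => by
    have := congrFun (congrArg DFunLike.coe hRU₁) z
    simp only [coe_comp', Function.comp_apply, add_apply, coe_smul', Pi.smul_apply,
      coe_id', id_eq, map_add, map_smul] at this
    linear_combination (norm := module) this
  have hint : ∀ x : H₁, RU (T x) = T (RT x) := fun x => by
    have hx : x = adjoint T (T (RT x)) + α • RT x := by
      rw [hT2]; module
    calc RU (T x) = RU (T (adjoint T (T (RT x)) + α • RT x)) := by rw [← hx]
      _ = RU (T (adjoint T (T (RT x)))) + α • RU (T (RT x)) := by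
            simp [map_add, map_smul]
      _ = (T (RT x) - α • RU (T (RT x))) + α • RU (T (RT x)) := by rw [hU]
      _ = T (RT x) := by module
  ext x
  simp only [sub_apply, add_apply, coe_comp', Function.comp_apply, coe_smul',
    Pi.smul_apply, map_sub, map_smul]
  rw [hint, hT2, hT1]
  simp only [map_sub, map_smul]
  rw [hS, hS]
  module
end

section
/- Let T, S : H₁ → H₂ be bounded linear operators between Hilbert spaces, α > 0, and let B ∈ H₁, g = TB. Let B_α = (T*T + αI)⁻¹T*g and B̃_α = (S*S + αI)⁻¹S*g̃ for some g̃ ∈ H₂. Then ‖B_α − B̃_α‖ ≤ (‖T − S‖/√α)‖B‖ + ‖g − g̃‖/(2√α). -/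
/-!
Write `E = B - Bα`. The normal equation for `Bα` says `α • Bα = T*(T E)`, so `E` solves the
normal equation with right-hand side `α • B`; this gives `‖Bα‖ ≤ ‖B‖` and `‖T E‖ ≤ √α ‖B‖ / 2`.
The difference `Btα - Bα` solves the normal equation for `S` with right-hand side
`S*(gt - g + (T - S) Bα) + (S - T)*(T E)`, and the a priori bound
`‖x‖ ≤ ‖y‖ / (2√α) + ‖z‖ / α` for `S*S x + α x = S* y + z` finishes the proof.
-/

open ContinuousLinearMap

open scoped RealInnerProductSpace

theorem Real.le_div_two_sqrt_add_div_of_sq_add_mul_sq_le {α a b s t : ℝ} (hα : 0 < α)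
    (ha : 0 ≤ a) (hb : 0 ≤ b) (h : s ^ 2 + α * t ^ 2 ≤ a * s + b * t) :
    t ≤ a / (2 * √α) + b / α := by
  obtain ⟨r, hr, rfl⟩ : ∃ r, 0 < r ∧ α = r ^ 2 :=
    ⟨√α, Real.sqrt_pos.mpr hα, (Real.sq_sqrt hα.le).symm⟩
  have hq : r ^ 2 * t ^ 2 - b * t ≤ (a / 2) ^ 2 := by nlinarith [sq_nonneg (2 * s - a)]
  rw [Real.sqrt_sq hr.le, div_add_div _ _ (by positivity) (by positivity),
    le_div_iff₀ (by positivity)]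
  by_contra! hlt
  have hlin : a * r + b < 2 * r ^ 2 * t - b := by nlinarith
  have hsq := mul_self_lt_mul_self (by positivity) hlin
  nlinarith [mul_nonneg (mul_nonneg ha hb) hr.le]

section NormalEquation

variable {E F : Type*} [NormedAddCommGroup E] [InnerProductSpace ℝ E] [CompleteSpace E]
  [NormedAddCommGroup F] [InnerProductSpace ℝ F] [CompleteSpace F] (S : E →L[ℝ] F) {α : ℝ}

theorem norm_apply_sq_add_mul_norm_sq_eq_inner {x w : E} (h : adjoint S (S x) + α • x = w) :
    ‖S x‖ ^ 2 + α * ‖x‖ ^ 2 = ⟪w, x⟫ := by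
  rw [← h, inner_add_left, adjoint_inner_left, real_inner_smul_left, real_inner_self_eq_norm_sq,
    real_inner_self_eq_norm_sq]

theorem norm_le_of_adjoint_apply_add_smul_eq (hα : 0 < α) {x z : E} {y : F}
    (h : adjoint S (S x) + α • x = adjoint S y + z) :
    ‖x‖ ≤ ‖y‖ / (2 * √α) + ‖z‖ / α := by
  have hid := norm_apply_sq_add_mul_norm_sq_eq_inner S h
  rw [inner_add_left, adjoint_inner_left] at hid
  refine Real.le_div_two_sqrt_add_div_of_sq_add_mul_sq_le hα (norm_nonneg y) (norm_nonneg z)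
    (s := ‖S x‖) ?_
  rw [hid]
  gcongr <;> exact real_inner_le_norm _ _

theorem norm_apply_le_of_adjoint_apply_add_smul_eq_smul (hα : 0 < α) {x b : E}
    (h : adjoint S (S x) + α • x = α • b) : ‖S x‖ ≤ √α / 2 * ‖b‖ := by
  have hid := norm_apply_sq_add_mul_norm_sq_eq_inner S h
  rw [real_inner_smul_left] at hid
  have hbx : ⟪b, x⟫ ≤ ‖b‖ * ‖x‖ := real_inner_le_norm b x
  have hsq : ‖S x‖ ^ 2 ≤ (√α / 2 * ‖b‖) ^ 2 := by
    rw [mul_pow, div_pow, Real.sq_sqrt hα.le]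
    nlinarith [mul_nonneg hα.le (sq_nonneg (‖b‖ - 2 * ‖x‖))]
  exact (pow_le_pow_iff_left₀ (norm_nonneg _) (by positivity) two_ne_zero).mp hsq

theorem norm_le_of_adjoint_apply_add_smul_eq_adjoint_apply (hα : 0 < α) {x b : E}
    (h : adjoint S (S x) + α • x = adjoint S (S b)) : ‖x‖ ≤ ‖b‖ := by
  have hsmul : α • x = adjoint S (S (b - x)) := by
    rw [map_sub, map_sub, ← h]
    abel
  have hpos : 0 ≤ ⟪x, b - x⟫ := by
    have : α * ⟪x, b - x⟫ = ‖S (b - x)‖ ^ 2 := by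
      rw [← real_inner_smul_left, hsmul, adjoint_inner_left, real_inner_self_eq_norm_sq]
    exact nonneg_of_mul_nonneg_right (this ▸ sq_nonneg _) hα
  rw [inner_sub_right, real_inner_self_eq_norm_sq] at hpos
  nlinarith [real_inner_le_norm x b, norm_nonneg x, norm_nonneg b]

end NormalEquation

/-- Tikhonov perturbation bound: if `g = TB`, `Bα = (T*T+αI)⁻¹T*g` and
`B̃α = (S*S+αI)⁻¹S*g̃` (characterized by the normal equations), then
`‖Bα − B̃α‖ ≤ (‖T−S‖/√α)‖B‖ + ‖g−g̃‖/(2√α)`. -/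
theorem stmt11 {H₁ H₂ : Type*}
    [NormedAddCommGroup H₁] [InnerProductSpace ℝ H₁] [CompleteSpace H₁]
    [NormedAddCommGroup H₂] [InnerProductSpace ℝ H₂] [CompleteSpace H₂]
    (T S : H₁ →L[ℝ] H₂) (α : ℝ) (hα : 0 < α)
    (B Bα Btα : H₁) (g gt : H₂) (hg : g = T B)
    (hBα : (adjoint T) (T Bα) + α • Bα = (adjoint T) g)
    (hBtα : (adjoint S) (S Btα) + α • Btα = (adjoint S) gt) :
    ‖Bα - Btα‖ ≤ ‖T - S‖ / Real.sqrt α * ‖B‖ + ‖g - gt‖ / (2 * Real.sqrt α) := by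
  subst hg
  have hBα_le : ‖Bα‖ ≤ ‖B‖ := norm_le_of_adjoint_apply_add_smul_eq_adjoint_apply T hα hBα
  have hE : adjoint T (T (B - Bα)) + α • (B - Bα) = α • B := by
    simp only [map_sub]
    linear_combination (norm := module) -hBα
  have hTE := norm_apply_le_of_adjoint_apply_add_smul_eq_smul T hα hE
  have hdiff : adjoint S (S (Btα - Bα)) + α • (Btα - Bα) =
      adjoint S (gt - T B + (T - S) Bα) + adjoint (S - T) (T (B - Bα)) := by
    simp only [map_sub, map_add, sub_apply, smul_sub]
    linear_combination (norm := module) hBtα - hBα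
  have hy : ‖gt - T B + (T - S) Bα‖ ≤ ‖T B - gt‖ + ‖T - S‖ * ‖B‖ := by
    calc ‖gt - T B + (T - S) Bα‖ ≤ ‖gt - T B‖ + ‖(T - S) Bα‖ := norm_add_le _ _
      _ ≤ ‖T B - gt‖ + ‖T - S‖ * ‖B‖ := by
        rw [norm_sub_rev]
        gcongr
        exact le_opNorm_of_le _ hBα_le
  have hz : ‖adjoint (S - T) (T (B - Bα))‖ ≤ ‖T - S‖ * (√α / 2 * ‖B‖) := by
    rw [← norm_sub_rev S T, ← LinearIsometryEquiv.norm_map adjoint (S - T)]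
    exact le_opNorm_of_le _ hTE
  calc ‖Bα - Btα‖ = ‖Btα - Bα‖ := norm_sub_rev _ _
    _ ≤ ‖gt - T B + (T - S) Bα‖ / (2 * √α) + ‖adjoint (S - T) (T (B - Bα))‖ / α :=
      norm_le_of_adjoint_apply_add_smul_eq S hα hdiff
    _ ≤ (‖T B - gt‖ + ‖T - S‖ * ‖B‖) / (2 * √α) + ‖T - S‖ * (√α / 2 * ‖B‖) / α := by gcongr
    _ = ‖T - S‖ / √α * ‖B‖ + ‖T B - gt‖ / (2 * √α) := by
      field_simp
      rw [Real.sq_sqrt hα.le]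
      ring
end

section
/- Let T : H₁ → H₂ be a bounded linear operator between Hilbert spaces, B ∈ H₁, and suppose B = φ(T*T) C for some C ∈ H₁ with ‖C‖ ≤ ρ, where φ : (0, γ] → (0,∞) is monotonically increasing with lim_{λ→0} φ(λ) = 0, γ ≥ ‖T‖², and sup_{0 ≤ λ ≤ γ} αφ(λ)/(λ+α) ≤ φ(α) for all α > 0. Let B_α = (T*T + αI)⁻¹T*TB. Then ‖B − B_α‖ ≤ ρ φ(α) for every α > 0. -/
open ContinuousLinearMap

/-!
Write `S = T*T` and `ψ(λ) = αφ(λ)/(λ + α)`. The functional calculus turns the scalar identity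
`(λ + α) ψ(λ) = α φ(λ)` into `(S + α) ψ(S) C = α B`, while the normal equation for `Bα` says that
`(S + α)(B - Bα) = α B`. Since `S ≥ 0`, the operator `S + α` is injective, so `B - Bα = ψ(S) C`,
and `‖ψ(S)‖ ≤ sup_{σ(S)} |ψ| ≤ φ(α)` because `σ(S) ⊆ [0, ‖T‖²] ⊆ [0, γ]`, where `ψ ≥ 0`.
-/

noncomputable def tikhonovResidual (α : ℝ) (φ : ℝ → ℝ) (l : ℝ) : ℝ := α * φ l / (l + α)

theorem ContinuousLinearMap.IsPositive.injective_add_smul {𝕜 E : Type*} [RCLike 𝕜]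
    [NormedAddCommGroup E] [InnerProductSpace 𝕜 E] {S : E →L[𝕜] E} (hS : S.IsPositive)
    {α : ℝ} (hα : 0 < α) : Function.Injective fun x => S x + (α : 𝕜) • x := by
  intro x y (hxy : S x + (α : 𝕜) • x = S y + (α : 𝕜) • y)
  rw [← sub_eq_zero, ← norm_eq_zero, ← sq_eq_zero_iff]
  have hz : S (x - y) + (α : 𝕜) • (x - y) = 0 := by
    rw [map_sub, smul_sub, sub_add_sub_comm, hxy, sub_self]
  have h0 : RCLike.re (inner 𝕜 (S (x - y) + (α : 𝕜) • (x - y)) (x - y)) = 0 := by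
    rw [hz, inner_zero_left, map_zero]
  rw [inner_add_left, inner_smul_left, map_add, RCLike.conj_ofReal, inner_self_eq_norm_sq_to_K,
    ← RCLike.ofReal_pow, ← RCLike.ofReal_mul, RCLike.ofReal_re] at h0
  nlinarith [hS.re_inner_nonneg_left (x - y), sq_nonneg ‖x - y‖]

section CStarAlgebra

variable {A : Type*} [CStarAlgebra A]

theorem spectrum_subset_Icc_norm [PartialOrder A] [StarOrderedRing A] {a : A} (ha : 0 ≤ a) :
    spectrum ℝ a ⊆ Set.Icc 0 ‖a‖ := by
  obtain _ | _ := subsingleton_or_nontrivial A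
  · simp [spectrum.of_subsingleton]
  · exact fun x hx => ⟨spectrum_nonneg_of_nonneg ha hx,
      (Real.le_norm_self x).trans (spectrum.norm_le_norm_of_mem hx)⟩

/-- Both sides vanish (junk values of `cfc`) when `φ` is not continuous on the spectrum. -/
theorem mul_cfc_tikhonovResidual_add_smul [PartialOrder A] [StarOrderedRing A] {a : A}
    (ha : 0 ≤ a) {α : ℝ} (hα : 0 < α) (φ : ℝ → ℝ) :
    a * cfc (tikhonovResidual α φ) a + α • cfc (tikhonovResidual α φ) a = α • cfc φ a := by
  have hden : ∀ l ∈ spectrum ℝ a, l + α ≠ 0 := fun l hl =>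
    (add_pos_of_nonneg_of_pos (spectrum_nonneg_of_nonneg ha hl) hα).ne'
  set ψ := tikhonovResidual α φ
  by_cases hφ : ContinuousOn φ (spectrum ℝ a)
  · have hψ : ContinuousOn ψ (spectrum ℝ a) := by
      unfold ψ tikhonovResidual; fun_prop (disch := assumption)
    calc a * cfc ψ a + α • cfc ψ a = cfc (fun l => l * ψ l + α * ψ l) a := by
          rw [cfc_add .., cfc_mul .., cfc_id' .., cfc_const_mul ..]
      _ = cfc (fun l => α * φ l) a := cfc_congr fun l hl => by
          simp only [ψ, tikhonovResidual]; field_simp [hden l hl]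
      _ = α • cfc φ a := cfc_const_mul ..
  · have hψ : ¬ ContinuousOn ψ (spectrum ℝ a) := fun hψ => hφ <| by
      refine (show ContinuousOn (fun l => ψ l * (l + α) / α) _ by fun_prop).congr fun l hl => ?_
      simp only [ψ, tikhonovResidual]; field_simp [hden l hl]
    simp [cfc_apply_of_not_continuousOn a hφ, cfc_apply_of_not_continuousOn a hψ]

theorem norm_cfc_tikhonovResidual_le {a : A} {γ α : ℝ} {φ : ℝ → ℝ}
    (ha : spectrum ℝ a ⊆ Set.Icc 0 γ) (hα : 0 < α) (hφ : ∀ l ∈ Set.Icc 0 γ, 0 ≤ φ l)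
    (hφα : 0 ≤ φ α) (hsup : ∀ l ∈ Set.Icc 0 γ, tikhonovResidual α φ l ≤ φ α) :
    ‖cfc (tikhonovResidual α φ) a‖ ≤ φ α :=
  norm_cfc_le hφα fun l hl => by
    have hl' := ha hl
    rw [Real.norm_of_nonneg (by have := hφ l hl'; have := hl'.1; unfold tikhonovResidual; positivity)]
    exact hsup l hl'

end CStarAlgebra

theorem stmt12_general {H₁ H₂ : Type*}
    [NormedAddCommGroup H₁] [InnerProductSpace ℂ H₁] [CompleteSpace H₁]
    [NormedAddCommGroup H₂] [InnerProductSpace ℂ H₂] [CompleteSpace H₂]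
    (T : H₁ →L[ℂ] H₂) (γ ρ : ℝ) (hγ : ‖T‖ ^ 2 ≤ γ)
    (φ : ℝ → ℝ) (hφ0 : φ 0 = 0)
    (hφpos : ∀ x ∈ Set.Ioc 0 γ, 0 < φ x)
    (hsup : ∀ α > (0:ℝ), ∀ l ∈ Set.Icc (0:ℝ) γ, α * φ l / (l + α) ≤ φ α)
    (C B : H₁) (hC : ‖C‖ ≤ ρ)
    (hB : B = cfc φ (adjoint T ∘L T) C)
    (α : ℝ) (hα : 0 < α) (Bα : H₁)
    (hBα : (adjoint T) (T Bα) + (α : ℂ) • Bα = (adjoint T) (T B)) :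
    ‖B - Bα‖ ≤ ρ * φ α := by
  set S := adjoint T ∘L T
  have hS : S.IsPositive := isPositive_adjoint_comp_self T
  have hSspec : spectrum ℝ S ⊆ Set.Icc 0 γ :=
    (spectrum_subset_Icc_norm ((nonneg_iff_isPositive S).mpr hS)).trans <|
      Set.Icc_subset_Icc_right (by rwa [norm_adjoint_comp_self, ← sq])
  have hφ : ∀ l ∈ Set.Icc 0 γ, 0 ≤ φ l := by
    rintro l ⟨hl0, hlγ⟩
    obtain rfl | hl := hl0.eq_or_lt
    exacts [hφ0.ge, (hφpos l ⟨hl, hlγ⟩).le]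
  have hφα : 0 ≤ φ α := by simpa [hφ0] using hsup α hα 0 ⟨le_rfl, (sq_nonneg _).trans hγ⟩
  set D := cfc (tikhonovResidual α φ) S C
  have hD : S D + (α : ℂ) • D = (α : ℂ) • B := by
    simpa [hB, Complex.coe_smul] using
      congr($(mul_cfc_tikhonovResidual_add_smul ((nonneg_iff_isPositive S).mpr hS) hα φ) C)
  have hE : S (B - Bα) + (α : ℂ) • (B - Bα) = (α : ℂ) • B := by
    change S Bα + _ = S B at hBα
    rw [map_sub, smul_sub, sub_add_sub_comm, hBα, add_sub_cancel_left]
  calc ‖B - Bα‖ = ‖D‖ := by rw [hS.injective_add_smul hα (hE.trans hD.symm)]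
    _ ≤ ‖cfc (tikhonovResidual α φ) S‖ * ‖C‖ := le_opNorm _ _
    _ ≤ φ α * ρ := mul_le_mul (norm_cfc_tikhonovResidual_le hSspec hα hφ hφα (hsup α hα)) hC
        (norm_nonneg _) hφα
    _ = ρ * φ α := mul_comm _ _

/-- Source-condition error estimate for Tikhonov regularization: if
`B = φ(T*T) C` with `‖C‖ ≤ ρ`, where `φ` is monotonically increasing and
positive on `(0,γ]` (extended by `φ(0) = 0`), `γ ≥ ‖T‖²`,
`lim_{λ→0⁺} φ(λ) = 0`, and `sup_{0≤λ≤γ} αφ(λ)/(λ+α) ≤ φ(α)` for all `α > 0`,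
then the Tikhonov approximation `Bα = (T*T+αI)⁻¹ T*T B` satisfies
`‖B − Bα‖ ≤ ρ φ(α)` for every `α > 0`. -/
theorem stmt12 {H₁ H₂ : Type*}
    [NormedAddCommGroup H₁] [InnerProductSpace ℂ H₁] [CompleteSpace H₁]
    [NormedAddCommGroup H₂] [InnerProductSpace ℂ H₂] [CompleteSpace H₂]
    (T : H₁ →L[ℂ] H₂) (γ ρ : ℝ) (hγ : ‖T‖ ^ 2 ≤ γ)
    (φ : ℝ → ℝ) (hφ0 : φ 0 = 0)
    (hφmono : MonotoneOn φ (Set.Ioc 0 γ))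
    (hφpos : ∀ x ∈ Set.Ioc 0 γ, 0 < φ x)
    (hφlim : Filter.Tendsto φ (nhdsWithin 0 (Set.Ioi 0)) (nhds 0))
    (hsup : ∀ α > (0:ℝ), ∀ l ∈ Set.Icc (0:ℝ) γ, α * φ l / (l + α) ≤ φ α)
    (C B : H₁) (hC : ‖C‖ ≤ ρ)
    (hB : B = cfc φ (adjoint T ∘L T) C)
    (α : ℝ) (hα : 0 < α) (Bα : H₁)
    (hBα : (adjoint T) (T Bα) + (α : ℂ) • Bα = (adjoint T) (T B)) :
    ‖B - Bα‖ ≤ ρ * φ α :=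
  stmt12_general T γ ρ hγ φ hφ0 hφpos hsup C B hC hB α hα Bα hBα
end

section
/- Let H be a Hilbert space, μ > 1, C > 0, and let x₀,...,x_N ∈ H and b ∈ H satisfy ‖b − xᵢ‖ ≤ μ⁻ⁱ C for all i ≤ l, for some l ∈ {0,...,N−1}. Let k = max{ i ∈ {0,...,N} : ‖xᵢ − xⱼ‖ ≤ 4C/μʲ for all j = 0,...,i }. Then l ≤ k and ‖b − x_k‖ ≤ 6C/μˡ. -/
lemma antitone_div_pow {μ C : ℝ} (hμ : 1 ≤ μ) (hC : 0 ≤ C) : Antitone fun i : ℕ => C / μ ^ i :=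
  fun _ _ hij => div_le_div_of_nonneg_left hC (by positivity) (pow_le_pow_right₀ hμ hij)

section Balancing

variable {E : Type*} [SeminormedAddCommGroup E] {x : ℕ → E} {b : E} {e : ℕ → ℝ} {l : ℕ}

lemma norm_sub_le_two_mul_of_antitone (he : Antitone e) (hb : ∀ i ≤ l, ‖b - x i‖ ≤ e i)
    {j : ℕ} (hj : j ≤ l) : ‖x l - x j‖ ≤ 2 * e j :=
  calc ‖x l - x j‖ ≤ ‖x l - b‖ + ‖b - x j‖ := norm_sub_le_norm_sub_add_norm_sub _ _ _
    _ = ‖b - x l‖ + ‖b - x j‖ := by rw [norm_sub_rev]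
    _ ≤ e j + e j := add_le_add ((hb l le_rfl).trans (he hj)) (hb j hj)
    _ = 2 * e j := (two_mul _).symm

lemma norm_sub_le_of_isGreatest_cluster {N k : ℕ} {c : ℝ} (he : Antitone e) (hc : 2 ≤ c)
    (he0 : ∀ i, 0 ≤ e i) (hl : l ≤ N) (hb : ∀ i ≤ l, ‖b - x i‖ ≤ e i)
    (hk : IsGreatest {i : ℕ | i ≤ N ∧ ∀ j ≤ i, ‖x i - x j‖ ≤ c * e j} k) :
    l ≤ k ∧ ‖b - x k‖ ≤ (1 + c) * e l := by
  have hl_mem : l ∈ {i : ℕ | i ≤ N ∧ ∀ j ≤ i, ‖x i - x j‖ ≤ c * e j} :=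
    ⟨hl, fun j hj => (norm_sub_le_two_mul_of_antitone he hb hj).trans
      (mul_le_mul_of_nonneg_right hc (he0 j))⟩
  have hlk : l ≤ k := hk.2 hl_mem
  refine ⟨hlk, ?_⟩
  calc ‖b - x k‖ ≤ ‖b - x l‖ + ‖x l - x k‖ := norm_sub_le_norm_sub_add_norm_sub _ _ _
    _ ≤ e l + c * e l := add_le_add (hb l le_rfl) (by rw [norm_sub_rev]; exact hk.1.2 l hlk)
    _ = (1 + c) * e l := by ring

end Balancing

theorem stmt14_general {H : Type*} [NormedAddCommGroup H]
    (N : ℕ) (x : ℕ → H) (b : H) (μ C : ℝ) (hμ : 1 < μ) (hC : 0 < C)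
    (l : ℕ) (hl : l + 1 ≤ N)
    (hb : ∀ i ≤ l, ‖b - x i‖ ≤ C / μ ^ i)
    (k : ℕ)
    (hk : IsGreatest {i : ℕ | i ≤ N ∧ ∀ j ≤ i, ‖x i - x j‖ ≤ 4 * C / μ ^ j} k) :
    l ≤ k ∧ ‖b - x k‖ ≤ 6 * C / μ ^ l := by
  have hμ0 : 0 < μ := zero_lt_one.trans hμ
  simp only [mul_div_assoc] at hk ⊢
  obtain ⟨hlk, hbk⟩ := norm_sub_le_of_isGreatest_cluster (antitone_div_pow hμ.le hC.le)
    (by norm_num) (fun i => div_nonneg hC.le (pow_pos hμ0 i).le) (by omega) hb hk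
  refine ⟨hlk, hbk.trans ?_⟩
  gcongr
  norm_num

/-- Abstract adaptive (balancing) principle: if `‖b − xᵢ‖ ≤ C/μⁱ` for all
`i ≤ l` (with `l ≤ N−1`), and
`k = max{ i ≤ N : ‖xᵢ − xⱼ‖ ≤ 4C/μʲ for all j ≤ i }`, then `l ≤ k` and
`‖b − x_k‖ ≤ 6C/μˡ`. -/
theorem stmt14 {H : Type*} [NormedAddCommGroup H] [InnerProductSpace ℝ H]
    (N : ℕ) (x : ℕ → H) (b : H) (μ C : ℝ) (hμ : 1 < μ) (hC : 0 < C)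
    (l : ℕ) (hl : l + 1 ≤ N)
    (hb : ∀ i ≤ l, ‖b - x i‖ ≤ C / μ ^ i)
    (k : ℕ)
    (hk : IsGreatest {i : ℕ | i ≤ N ∧ ∀ j ≤ i, ‖x i - x j‖ ≤ 4 * C / μ ^ j} k) :
    l ≤ k ∧ ‖b - x k‖ ≤ 6 * C / μ ^ l :=
  stmt14_general N x b μ C hμ hC l hl hb k hk
end

section
/- Let μ > 1, γ > 0, δ > 0 with α₀ := δ²(d+2)² ≤ γ, and αᵢ = μ^{2i} α₀ for i = 0,...,N. Let φ : (0, γ] → (0, ∞) be increasing, ρ, C > 0, and define l = max{ i ∈ {0,...,N−1} : ρ μⁱ φ(αᵢ) ≤ C }. Let α_δ ∈ (0, γ] satisfy ρ φ(α_δ) = C δ(d+2)/√α_δ. Then α_δ < α_{l+1}, and consequently 1/μˡ ≤ μ δ(d+2)/√α_δ, i.e. C/μˡ ≤ μ ρ φ(α_δ). -/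
/-!
The function `λ ↦ φ(λ)√λ` is increasing, and the defining equation of `α_δ` reads
`ρ φ(α_δ)√α_δ = C δ(d+2)`. Maximality of `l` gives `C < ρ μ^{l+1} φ(α_{l+1})`, and since
`√α_{l+1} = μ^{l+1} δ(d+2)` this says `C δ(d+2) < ρ φ(α_{l+1})√α_{l+1}`. Hence `α_δ < α_{l+1}`,
so `√α_δ < μ^{l+1} δ(d+2)`, which turns `ρ φ(α_δ) = C δ(d+2)/√α_δ` into `C/μˡ ≤ μ ρ φ(α_δ)`.
-/

open Real

lemma Real.sqrt_pow_even_mul_sq {a b : ℝ} (i : ℕ) (ha : 0 ≤ a) (hb : 0 ≤ b) :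
    √(a ^ (2 * i) * b ^ 2) = a ^ i * b := by
  rw [pow_mul', ← mul_pow, Real.sqrt_sq (by positivity)]

lemma div_pow_le_mul_div_of_lt_pow_succ_mul {μ A C x : ℝ} (l : ℕ) (hμ : 0 < μ) (hA : 0 < A)
    (hC : 0 ≤ C) (hx : 0 < x) (hxlt : x < μ ^ (l + 1) * A) :
    C / μ ^ l ≤ μ * (C * A / x) :=
  calc C / μ ^ l = μ * (C * A / (μ ^ (l + 1) * A)) := by field_simp; ring
    _ ≤ μ * (C * A / x) := by gcongr

theorem stmt15_general (d N : ℕ) (μ γ δ ρ C : ℝ) (hμ : 1 < μ) (hδ : 0 < δ)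
    (hρ : 0 < ρ) (hC : 0 < C)
    (φ : ℝ → ℝ) (hφmono : MonotoneOn φ (Set.Ioc 0 γ))
    (hφpos : ∀ x ∈ Set.Ioc 0 γ, 0 < φ x)
    (l : ℕ)
    (hmax : IsGreatest {i : ℕ | i ≤ N - 1 ∧
      ρ * μ ^ i * φ (μ ^ (2 * i) * (δ ^ 2 * ((d : ℝ) + 2) ^ 2)) ≤ C} l)
    (hlN : l + 1 ≤ N - 1)
    (hdom : μ ^ (2 * (l + 1)) * (δ ^ 2 * ((d : ℝ) + 2) ^ 2) ≤ γ)
    (αδ : ℝ) (hαδ : αδ ∈ Set.Ioc 0 γ)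
    (heq : ρ * φ αδ = C * (δ * ((d : ℝ) + 2)) / Real.sqrt αδ) :
    αδ < μ ^ (2 * (l + 1)) * (δ ^ 2 * ((d : ℝ) + 2) ^ 2) ∧
      C / μ ^ l ≤ μ * (ρ * φ αδ) := by
  set A := δ * ((d : ℝ) + 2)
  set B := μ ^ (2 * (l + 1)) * (δ ^ 2 * ((d : ℝ) + 2) ^ 2)
  have hA : 0 < A := by positivity
  have hB : B ∈ Set.Ioc 0 γ := ⟨by positivity, hdom⟩
  have hsqrtB : √B = μ ^ (l + 1) * A := by
    rw [← Real.sqrt_pow_even_mul_sq (l + 1) (by positivity) hA.le, mul_pow]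
  have hsqrtαδ : 0 < √αδ := Real.sqrt_pos.2 hαδ.1
  have hexceed : C < ρ * μ ^ (l + 1) * φ B :=
    not_le.1 fun h => (hmax.2 ⟨hlN, h⟩ : l + 1 ≤ l).not_gt l.lt_succ_self
  have hprod : ρ * (φ αδ * √αδ) < ρ * (φ B * √B) :=
    calc ρ * (φ αδ * √αδ) = C * A := by rw [← mul_assoc, heq]; field_simp
      _ < ρ * μ ^ (l + 1) * φ B * A := by gcongr
      _ = ρ * (φ B * √B) := by rw [hsqrtB]; ring
  have hmono : MonotoneOn (φ * Real.sqrt) (Set.Ioc 0 γ) :=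
    hφmono.mul (Real.sqrt_monotone.monotoneOn _) (fun x hx => (hφpos x hx).le)
      fun x _ => Real.sqrt_nonneg x
  have hlt : αδ < B := hmono.reflect_lt hαδ hB (lt_of_mul_lt_mul_left hprod hρ.le)
  refine ⟨hlt, ?_⟩
  rw [heq]
  refine div_pow_le_mul_div_of_lt_pow_succ_mul l (by linarith) hA hC.le hsqrtαδ ?_
  rw [← hsqrtB]
  exact Real.sqrt_lt_sqrt hαδ.1.le hlt

/-- Key inequality of the adaptive parameter choice: with `α₀ = δ²(d+2)² ≤ γ`,
`αᵢ = μ^{2i}α₀`, `φ` increasing and positive on `(0,γ]`,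
`l = max{ i ≤ N−1 : ρ μⁱ φ(αᵢ) ≤ C }` (with `l+1 ≤ N−1` and `α_{l+1} ≤ γ`),
and `α_δ ∈ (0,γ]` satisfying `ρ φ(α_δ) = C δ(d+2)/√α_δ`, one has
`α_δ < α_{l+1}` and consequently `C/μˡ ≤ μ ρ φ(α_δ)`. -/
theorem stmt15 (d N : ℕ) (μ γ δ ρ C : ℝ) (hμ : 1 < μ) (hγ : 0 < γ) (hδ : 0 < δ)
    (hρ : 0 < ρ) (hC : 0 < C)
    (hα₀ : δ ^ 2 * ((d : ℝ) + 2) ^ 2 ≤ γ)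
    (φ : ℝ → ℝ) (hφmono : MonotoneOn φ (Set.Ioc 0 γ))
    (hφpos : ∀ x ∈ Set.Ioc 0 γ, 0 < φ x)
    (l : ℕ)
    (hmax : IsGreatest {i : ℕ | i ≤ N - 1 ∧
      ρ * μ ^ i * φ (μ ^ (2 * i) * (δ ^ 2 * ((d : ℝ) + 2) ^ 2)) ≤ C} l)
    (hlN : l + 1 ≤ N - 1)
    (hdom : μ ^ (2 * (l + 1)) * (δ ^ 2 * ((d : ℝ) + 2) ^ 2) ≤ γ)
    (αδ : ℝ) (hαδ : αδ ∈ Set.Ioc 0 γ)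
    (heq : ρ * φ αδ = C * (δ * ((d : ℝ) + 2)) / Real.sqrt αδ) :
    αδ < μ ^ (2 * (l + 1)) * (δ ^ 2 * ((d : ℝ) + 2) ^ 2) ∧
      C / μ ^ l ≤ μ * (ρ * φ αδ) :=
  stmt15_general d N μ γ δ ρ C hμ hδ hρ hC φ hφmono hφpos l hmax hlN hdom αδ hαδ heq
end
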